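/- arXiv:2510.10430 — 3 statements merged into one kernel-verified Lean document; each statement's English description precedes it below -/
import Mathlib

section
/- Let G be a finite group and let χ : G → ℂ be a class function, i.e., χ(x g x⁻¹) = χ(g) for all x, g ∈ G. Then for every g ∈ G one has χ(g) = Σ_H (|H|/|G|) · Ind_H^G(θ_H · χ|_H)(g), where the sum runs over all cyclic subgroups H of G, θ_H · χ|_H denotes the function on H sending h to χ(h) if h generates H and to 0 otherwise, and for a function f : H → ℂ the induced class function is Ind_H^G f (g) = (1/|H|) · Σ_{x ∈ G with x⁻¹ g x ∈ H} f(x⁻¹ g x). -/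
/-!
Since `χ` is a class function, `χ g` is the average of `χ (x⁻¹ * g * x)` over `x ∈ G`. Each
conjugate `x⁻¹ * g * x` generates exactly one cyclic subgroup, so `χ (x⁻¹ * g * x)` is the sum
over cyclic `H` of `θ_H · χ|_H` evaluated at it; exchanging the sums over `x` and `H` gives the
formula, the factor `|H|` cancelling against the `1 / |H|` in `Ind_H^G`.
-/

open Subgroup Finset

section

variable {G M : Type*} [Group G] [AddCommMonoid M]

open Classical in
/-- The function `θ_H · f|_H` of the paper, extended by zero from `H` to `G`. -/
noncomputable def generatorsIndicator (H : Subgroup G) (f : G → M) (y : G) : M :=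
  if y ∈ H then (if zpowers y = H then f y else 0) else 0

theorem finsum_mem_isCyclic_generatorsIndicator (f : G → M) (y : G) :
    ∑ᶠ H ∈ {H : Subgroup G | IsCyclic H}, generatorsIndicator H f y = f y := by
  rw [finsum_eq_single _ (zpowers y) fun H hH => by simp [generatorsIndicator, Ne.symm hH]]
  simp [generatorsIndicator, mem_zpowers, isCyclic_zpowers]

end

open Classical in
theorem classfun_eq_sum_ind_cyclic (G : Type*) [Group G] [Fintype G]
    (χ : G → ℂ) (hχ : ∀ x g : G, χ (x * g * x⁻¹) = χ g) (g : G) :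
    χ g = ∑ᶠ (H : Subgroup G) (_ : IsCyclic H),
      ((Nat.card H : ℂ) / (Nat.card G : ℂ)) *
        ((1 / (Nat.card H : ℂ)) *
          ∑ x : G, if x⁻¹ * g * x ∈ H then
            (if Subgroup.zpowers (x⁻¹ * g * x) = H then χ (x⁻¹ * g * x) else 0)
          else 0) := by
  change χ g = ∑ᶠ H ∈ {H : Subgroup G | IsCyclic H}, ((Nat.card H : ℂ) / Nat.card G) *
    ((1 / (Nat.card H : ℂ)) * ∑ x : G, generatorsIndicator H χ (x⁻¹ * g * x))
  have hG : (Nat.card G : ℂ) ≠ 0 := Nat.cast_ne_zero.mpr Nat.card_pos.ne'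
  have hconj (x : G) : χ (x⁻¹ * g * x) = χ g := by simpa using hχ x⁻¹ g
  calc χ g = (∑ᶠ _ ∈ (Set.univ : Set G), χ g) * (Nat.card G : ℂ)⁻¹ := by
        rw [finsum_mem_univ, finsum_eq_sum_of_fintype, sum_const, card_univ, nsmul_eq_mul,
          ← Nat.card_eq_fintype_card]
        field_simp
    _ = (∑ᶠ x ∈ Set.univ, ∑ᶠ H ∈ {H : Subgroup G | IsCyclic H},
          generatorsIndicator H χ (x⁻¹ * g * x)) * (Nat.card G : ℂ)⁻¹ := by
        simp_rw [finsum_mem_isCyclic_generatorsIndicator, hconj]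
    _ = ∑ᶠ H ∈ {H : Subgroup G | IsCyclic H},
          (∑ᶠ x ∈ Set.univ, generatorsIndicator H χ (x⁻¹ * g * x)) * (Nat.card G : ℂ)⁻¹ := by
        rw [finsum_mem_comm _ (Set.toFinite _) (Set.toFinite _), finsum_mem_mul]
    _ = _ := by
        refine finsum_mem_congr rfl fun H _ => ?_
        have hH : (Nat.card H : ℂ) ≠ 0 := Nat.cast_ne_zero.mpr Nat.card_pos.ne'
        rw [finsum_mem_univ, finsum_eq_sum_of_fintype]
        field_simp
end

section
/- Let H be a finite cyclic group and let K ⊆ H be a subset containing the identity element and closed under taking powers (if h ∈ K then h^k ∈ K for every integer k). Define θ_{K,H} : H → ℂ by θ_{K,H}(h) = 1 − Σ_B (|B|/|H|) · Ind_B^H θ_B (h), where the sum runs over all subgroups B of H contained in K. Then for every h ∈ H one has θ_{K,H}(h) = 1 if h ∉ K and θ_{K,H}(h) = 0 if h ∈ K. -/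
/- Trace computation (3.4): for a finite cyclic group `H` and a subset `K ⊆ H` containing
the identity and closed under taking (integer) powers, the function
`θ_{K,H}(h) = 1 - ∑_{B ⊆ K} (|B|/|H|) * Ind_B^H θ_B (h)` (sum over subgroups `B` of `H`
contained in `K`) is the characteristic function of `H \ K`. -/
open Classical in
theorem theta_KH_is_characteristic (H : Type*) [Group H] [Fintype H] [IsCyclic H]
    (K : Set H) (h1 : (1 : H) ∈ K) (hK : ∀ h ∈ K, ∀ k : ℤ, h ^ k ∈ K) (h : H) :
    (1 - ∑ᶠ (B : Subgroup H) (_ : (B : Set H) ⊆ K),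
        ((Nat.card B : ℂ) / (Nat.card H : ℂ)) *
          ((1 / (Nat.card B : ℂ)) *
            ∑ x : H, if x⁻¹ * h * x ∈ B then
              (if Subgroup.zpowers (x⁻¹ * h * x) = B then (1 : ℂ) else 0)
            else 0)) =
      if h ∈ K then 0 else 1 := by
  have hcomm : ∀ a b : H, a * b = b * a := fun a b =>
    (IsCyclic.commGroup (α := H)).mul_comm a b
  have hconj : ∀ x : H, x⁻¹ * h * x = h := by
    intro x
    rw [mul_assoc, hcomm h x, ← mul_assoc, inv_mul_cancel, one_mul]
  have hHcard : (Nat.card H : ℂ) ≠ 0 := by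
    exact_mod_cast Nat.card_pos.ne'
  have hterm : ∀ B : Subgroup H,
      ((Nat.card B : ℂ) / (Nat.card H : ℂ)) *
          ((1 / (Nat.card B : ℂ)) *
            ∑ x : H, if x⁻¹ * h * x ∈ B then
              (if Subgroup.zpowers (x⁻¹ * h * x) = B then (1 : ℂ) else 0)
            else 0) = if Subgroup.zpowers h = B then 1 else 0 := by
    intro B
    have hBcard : (Nat.card B : ℂ) ≠ 0 := by
      exact_mod_cast Nat.card_pos.ne'
    have hx : ∀ x : H, (if x⁻¹ * h * x ∈ B then
        (if Subgroup.zpowers (x⁻¹ * h * x) = B then (1 : ℂ) else 0) else 0) =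
        if Subgroup.zpowers h = B then 1 else 0 := by
      intro x
      rw [hconj x]
      by_cases hzb : Subgroup.zpowers h = B
      · have : h ∈ B := hzb ▸ Subgroup.mem_zpowers h
        simp [this, hzb]
      · simp [hzb]
    simp only [hx, Finset.sum_const, Finset.card_univ, nsmul_eq_mul]
    rw [Nat.card_eq_fintype_card]
    by_cases hzb : Subgroup.zpowers h = B <;>
      simp [hzb] <;> field_simp
  simp only [finsum_eq_if] at *
  have : (∑ᶠ (B : Subgroup H), if (B : Set H) ⊆ K then
      ((Nat.card B : ℂ) / (Nat.card H : ℂ)) *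
          ((1 / (Nat.card B : ℂ)) *
            ∑ x : H, if x⁻¹ * h * x ∈ B then
              (if Subgroup.zpowers (x⁻¹ * h * x) = B then (1 : ℂ) else 0)
            else 0) else 0) =
      if ((Subgroup.zpowers h : Set H) ⊆ K) then 1 else 0 := by
    rw [finsum_eq_sum_of_fintype]
    have : ∀ B : Subgroup H, (if (B : Set H) ⊆ K then
        ((Nat.card B : ℂ) / (Nat.card H : ℂ)) *
          ((1 / (Nat.card B : ℂ)) *
            ∑ x : H, if x⁻¹ * h * x ∈ B then
              (if Subgroup.zpowers (x⁻¹ * h * x) = B then (1 : ℂ) else 0)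
            else 0) else 0) =
        if Subgroup.zpowers h = B then (if (B : Set H) ⊆ K then 1 else 0) else 0 := by
      intro B
      rw [hterm B]
      by_cases hsub : (B : Set H) ⊆ K <;> simp [hsub]
    simp only [this]
    rw [Finset.sum_ite_eq]
    simp
  rw [this]
  have hiff : (Subgroup.zpowers h : Set H) ⊆ K ↔ h ∈ K := by
    constructor
    · intro hs; exact hs (Subgroup.mem_zpowers h)
    · intro hh y hy
      obtain ⟨k, rfl⟩ := Subgroup.mem_zpowers_iff.mp hy
      exact hK h hh k
  by_cases hh : h ∈ K <;> simp [hh, hiff]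
end

section
/- Let H be a nontrivial finite cyclic group, let A be a commutative ring that is a ℚ-algebra, and write A_ℂ = ℂ ⊗_ℚ A. Let m ≥ 1, let x_1, …, x_m be nilpotent elements of A, and let φ_1, …, φ_m : H → ℂˣ be nontrivial group homomorphisms. Set K = {h ∈ H : φ_j(h) = 1 for some j ∈ {1,…,m}}. Then there exists a unique family (a_χ), indexed by the group homomorphisms χ : H → ℂˣ, of elements a_χ ∈ A, such that: (1) for every h ∈ K, Σ_χ a_χ·χ(h) = 0 in A_ℂ; and (2) for every h ∈ H ∖ K, (Σ_χ a_χ·χ(h)) · Π_{j=1}^m (1 − φ_j(h)·exp(x_j)) = 1 in A_ℂ. Here exp(x) denotes the finite sum Σ_{k≥0} x^k/k! (well defined since x is nilpotent, as A is a ℚ-algebra), elements of A and of ℂ are regarded inside A_ℂ via a ↦ 1⊗a and z ↦ z⊗1, and for h ∈ H ∖ K each factor 1 − φ_j(h)·exp(x_j) is invertible in A_ℂ because 1 − φ_j(h) ≠ 0 and x_j is nilpotent. -/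
/-!
View a family `(a_χ)` as an element of the group algebra `A[Ĥ]`. For each `h : H`, the map
`a ↦ ∑ χ, χ(h) ⊗ a_χ` is a ring homomorphism `A[Ĥ] → ℂ ⊗[ℚ] A`, and these maps are jointly
injective by orthogonality of characters; this gives uniqueness, and reduces existence to one
factor `1 - φ(h) e^x` at a time. For that factor take `g ∈ ℚ[X]` with `g(1) = 0` and
`g(ζ) (1 - ζ) = 1` at every other `|H|`-th root of unity `ζ` (from a Bézout relation between
`1 - X` and `1 + X + ⋯ + X^(|H|-1)`). Since `e^x - 1` is nilpotent,
`g(φ) · (1 - g(φ) φ (e^x - 1))⁻¹` exists in `A[Ĥ]`, and it vanishes where `φ(h) = 1` and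
inverts `1 - φ(h) e^x` elsewhere, because `1 - ζ e^x = (1 - ζ) (1 - g(ζ) ζ (e^x - 1))`.
-/

open scoped TensorProduct
open MonoidAlgebra Polynomial Finset

theorem isCoprime_one_sub_X_geom_sum {N : ℕ} (hN : N ≠ 0) :
    IsCoprime (1 - X : ℚ[X]) (∑ r ∈ range N, X ^ r) := by
  rw [← neg_sub, IsCoprime.neg_left_iff, ← C_1, (irreducible_X_sub_C 1).coprime_iff_not_dvd,
    dvd_iff_isRoot]
  simpa [eval_finsetSum] using hN

theorem exists_aeval_eq_zero_and_mul_one_sub_eq_one {K : Type*} [Field K] [Algebra ℚ K] {N : ℕ}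
    (hN : N ≠ 0) :
    ∃ g : ℚ[X], aeval (1 : K) g = 0 ∧ ∀ ζ : K, ζ ^ N = 1 → ζ ≠ 1 → aeval ζ g * (1 - ζ) = 1 := by
  obtain ⟨u, v, huv⟩ := isCoprime_one_sub_X_geom_sum hN
  refine ⟨u ^ 2 * (1 - X), by simp, fun ζ hζN hζ1 => ?_⟩
  have hgeom : ∑ r ∈ range N, ζ ^ r = 0 := by rw [geom_sum_eq hζ1, hζN, sub_self, zero_div]
  have hu : aeval ζ u * (1 - ζ) = 1 := by simpa [hgeom] using congrArg (aeval ζ) huv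
  simp only [map_mul, map_pow, map_sub, map_one, aeval_X]
  linear_combination (aeval ζ u * (1 - ζ) + 1) * hu

section charEval

variable {H Γ : Type*} [Group H] [CommGroup Γ] (A : Type*) [CommRing A] [Algebra ℚ A]

noncomputable def charEval (ι : Γ →* H →* ℂˣ) (h : H) :
    MonoidAlgebra A Γ →+* ℂ ⊗[ℚ] A :=
  liftNCRingHom Algebra.TensorProduct.includeRight.toRingHom
    ((Algebra.TensorProduct.includeLeft (S := ℚ)).toMonoidHom.comp
      ((Units.coeHom ℂ).comp ((MonoidHom.eval h).comp ι)))
    fun _ _ => Commute.all _ _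

variable {A} (ι : Γ →* H →* ℂˣ)

@[simp]
theorem charEval_single (h : H) (γ : Γ) (a : A) :
    charEval A ι h (single γ a) = (ι γ h : ℂ) ⊗ₜ a := by
  simp [charEval]

theorem charEval_apply (h : H) (x : MonoidAlgebra A Γ) :
    charEval A ι h x = ∑ᶠ γ, (ι γ h : ℂ) ⊗ₜ x.coeff γ := by
  rw [finsum_eq_sum_of_support_subset _ (s := x.coeff.support) fun γ hγ =>
    Finsupp.mem_support_iff.2 fun h0 => hγ (by rw [h0, TensorProduct.tmul_zero])]
  conv_lhs => rw [← sum_coeff_single x]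
  simp [Finsupp.sum]

theorem charEval_of (h : H) (γ : Γ) :
    charEval A ι h (of A Γ γ) = algebraMap ℂ (ℂ ⊗[ℚ] A) (ι γ h) := by
  simp [Algebra.TensorProduct.algebraMap_apply]

theorem charEval_algebraMap (h : H) (a : A) :
    charEval A ι h (algebraMap A (MonoidAlgebra A Γ) a) = 1 ⊗ₜ a := by
  simp [coe_algebraMap]

theorem charEval_aeval_of (h : H) (γ : Γ) (g : ℚ[X]) :
    charEval A ι h (aeval (of A Γ γ) g) = algebraMap ℂ (ℂ ⊗[ℚ] A) (aeval (ι γ h : ℂ) g) := by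
  rw [← RingHom.toRatAlgHom_apply, ← aeval_algHom_apply, RingHom.toRatAlgHom_apply, charEval_of,
    aeval_algebraMap_apply]

theorem sum_charEval [Fintype H] (hι : Function.Injective ι) (x : MonoidAlgebra A Γ) :
    ∑ h, charEval A ι h x = (Fintype.card H : ℚ) • (1 ⊗ₜ x.coeff 1) := by
  induction x using MonoidAlgebra.induction_linear with
  | zero => simp
  | add x y hx hy => simp [Finset.sum_add_distrib, hx, hy, TensorProduct.tmul_add]
  | single γ a =>
    simp only [charEval_single, ← TensorProduct.sum_tmul, coeff_single]
    by_cases hγ : γ = 1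
    · subst hγ
      simp [TensorProduct.smul_tmul']
    · have hsum : ∑ h, (ι γ h : ℂ) = 0 := sum_hom_units_eq_zero ((Units.coeHom ℂ).comp (ι γ))
        fun h1 => hγ <| hι <| by ext g; simpa using DFunLike.congr_fun h1 g
      simp [hsum, Ne.symm hγ]

theorem eq_zero_of_charEval_eq_zero [Fintype H] (hι : Function.Injective ι)
    {x : MonoidAlgebra A Γ} (hx : ∀ h, charEval A ι h x = 0) : x = 0 := by
  ext γ
  have hz := sum_charEval ι hι (single γ⁻¹ 1 * x)
  simp only [map_mul, hx, mul_zero, Finset.sum_const_zero, coeff_single_mul_apply, inv_inv,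
    mul_one, one_mul] at hz
  have hcard : (Fintype.card H : ℚ) ≠ 0 := by positivity
  have := (smul_eq_zero.mp hz.symm).resolve_left hcard
  exact Algebra.TensorProduct.includeRight_injective (algebraMap ℚ ℂ).injective
    (by simpa using this)

theorem exists_charEval_partialInverse [Fintype H] (γ : Γ) {E : A} (hE : IsNilpotent (E - 1)) :
    ∃ b : MonoidAlgebra A Γ, ∀ h,
      (ι γ h = 1 → charEval A ι h b = 0) ∧
        (ι γ h ≠ 1 → charEval A ι h (b * (1 - of A Γ γ * algebraMap A _ E)) = 1) := by
  obtain ⟨g, hg1, hgζ⟩ :=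
    exists_aeval_eq_zero_and_mul_one_sub_eq_one (K := ℂ) (Fintype.card_ne_zero (α := H))
  set G := aeval (of A Γ γ) g
  set U := algebraMap A (MonoidAlgebra A Γ) (E - 1)
  obtain ⟨w, hw⟩ := ((Commute.all _ _).isNilpotent_mul_left (hE.map (algebraMap A _)) :
    IsNilpotent (G * of A Γ γ * U)).isUnit_one_sub
  refine ⟨G * ↑w⁻¹, fun h => ⟨fun hγ => ?_, fun hγ => ?_⟩⟩
  · rw [map_mul, charEval_aeval_of, hγ, Units.val_one, hg1, map_zero, zero_mul]
  · have hζ : (ι γ h : ℂ) ^ Fintype.card H = 1 := by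
      rw [← Units.val_pow_eq_pow_val, ← map_pow, pow_card_eq_one, map_one, Units.val_one]
    have hG : charEval A ι h (G * (1 - of A Γ γ)) = 1 := by
      rw [map_mul, map_sub, map_one, charEval_aeval_of, charEval_of, ← map_one (algebraMap ℂ _),
        ← map_sub, ← map_mul, hgζ _ hζ (by simpa using hγ), map_one]
    have hw' : charEval A ι h (↑w⁻¹ * (1 - G * of A Γ γ * U)) = 1 := by
      rw [← hw, Units.inv_mul, map_one]
    have hE1 : algebraMap A (MonoidAlgebra A Γ) E = 1 + U := by
      simp only [U, map_sub, map_one]; ring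
    rw [hE1]
    simp only [map_mul, map_sub, map_one, map_add] at hG hw' ⊢
    linear_combination (charEval A ι h ↑w⁻¹) * hG + hw'

theorem existsUnique_charEval_partialInverse [Fintype H] (hι : Function.Injective ι)
    {J : Type*} [Fintype J] (ψ : J → Γ) (E : J → A) (hE : ∀ j, IsNilpotent (E j - 1)) :
    ∃! x : MonoidAlgebra A Γ,
      (∀ h, (∃ j, ι (ψ j) h = 1) → charEval A ι h x = 0) ∧
      (∀ h, (¬ ∃ j, ι (ψ j) h = 1) →
        charEval A ι h x * ∏ j, (1 - (ι (ψ j) h : ℂ) ⊗ₜ E j) = 1) := by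
  choose b hb using fun j => exists_charEval_partialInverse ι (ψ j) (hE j)
  have hfactor : ∀ h j, charEval A ι h (1 - of A Γ (ψ j) * algebraMap A _ (E j)) =
      1 - (ι (ψ j) h : ℂ) ⊗ₜ E j := fun h j => by
    rw [map_sub, map_one, map_mul, charEval_of, charEval_algebraMap,
      Algebra.TensorProduct.algebraMap_apply, Algebra.algebraMap_self_apply,
      Algebra.TensorProduct.tmul_mul_tmul, one_mul, mul_one]
  have hx0 : ∀ h, (∃ j, ι (ψ j) h = 1) → charEval A ι h (∏ j, b j) = 0 := fun h ⟨j, hj⟩ => by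
    rw [map_prod]
    exact prod_eq_zero (mem_univ j) ((hb j h).1 hj)
  have hx1 : ∀ h, (¬ ∃ j, ι (ψ j) h = 1) →
      charEval A ι h (∏ j, b j) * ∏ j, (1 - (ι (ψ j) h : ℂ) ⊗ₜ E j) = 1 := fun h hK => by
    push Not at hK
    rw [map_prod, ← prod_mul_distrib]
    exact prod_eq_one fun j _ => by rw [← hfactor, ← map_mul]; exact (hb j h).2 (hK j)
  refine ⟨∏ j, b j, ⟨hx0, hx1⟩, fun y ⟨hy0, hy1⟩ => ?_⟩
  refine sub_eq_zero.mp (eq_zero_of_charEval_eq_zero ι hι fun h => ?_)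
  rw [map_sub, sub_eq_zero]
  by_cases hK : ∃ j, ι (ψ j) h = 1
  · rw [hy0 h hK, hx0 h hK]
  · exact left_inv_eq_right_inv (hy1 h hK) ((mul_comm _ _).trans (hx1 h hK))

end charEval

open scoped TensorProduct in
theorem exists_unique_partial_inverse_general (H : Type*) [Group H] [Fintype H]
    (A : Type*) [CommRing A] [Algebra ℚ A]
    (m : ℕ)
    (x : Fin m → A) (n : Fin m → ℕ) (hx : ∀ j, x j ^ n j = 0)
    (φ : Fin m → (H →* ℂˣ)) :
    ∃! a : (H →* ℂˣ) → A,
      (∀ h : H, (∃ j, φ j h = 1) →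
          (∑ᶠ χ : H →* ℂˣ, ((χ h : ℂ) ⊗ₜ[ℚ] a χ)) = (0 : ℂ ⊗[ℚ] A)) ∧
      (∀ h : H, (¬ ∃ j, φ j h = 1) →
          (∑ᶠ χ : H →* ℂˣ, ((χ h : ℂ) ⊗ₜ[ℚ] a χ)) *
              ∏ j : Fin m, ((1 : ℂ ⊗[ℚ] A) -
                ((φ j h : ℂ) ⊗ₜ[ℚ] ∑ k ∈ Finset.range (n j),
                  ((k.factorial : ℚ)⁻¹ • x j ^ k))) = 1) := by
  have hE : ∀ j, IsNilpotent (∑ k ∈ range (n j), (k.factorial : ℚ)⁻¹ • x j ^ k - 1) := fun j => by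
    rw [← IsNilpotent.exp_eq_sum (hx j)]
    exact IsNilpotent.isNilpotent_exp_sub_one ⟨_, hx j⟩
  rw [(coeffEquiv.trans Finsupp.equivFunOnFinite).symm.existsUnique_congr_left]
  simpa [charEval_apply] using
    existsUnique_charEval_partialInverse (MonoidHom.id _) Function.injective_id φ _ hE

open scoped TensorProduct in
theorem exists_unique_partial_inverse (H : Type*) [Group H] [Fintype H] [IsCyclic H]
    [Nontrivial H] (A : Type*) [CommRing A] [Algebra ℚ A]
    (m : ℕ) (hm : 1 ≤ m)
    (x : Fin m → A) (n : Fin m → ℕ) (hx : ∀ j, x j ^ n j = 0)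
    (φ : Fin m → (H →* ℂˣ)) (hφ : ∀ j, φ j ≠ 1) :
    ∃! a : (H →* ℂˣ) → A,
      (∀ h : H, (∃ j, φ j h = 1) →
          (∑ᶠ χ : H →* ℂˣ, ((χ h : ℂ) ⊗ₜ[ℚ] a χ)) = (0 : ℂ ⊗[ℚ] A)) ∧
      (∀ h : H, (¬ ∃ j, φ j h = 1) →
          (∑ᶠ χ : H →* ℂˣ, ((χ h : ℂ) ⊗ₜ[ℚ] a χ)) *
              ∏ j : Fin m, ((1 : ℂ ⊗[ℚ] A) -
                ((φ j h : ℂ) ⊗ₜ[ℚ] ∑ k ∈ Finset.range (n j),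
                  ((k.factorial : ℚ)⁻¹ • x j ^ k))) = 1) :=
  exists_unique_partial_inverse_general H A m x n hx φ
end
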